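/- arXiv:2212.06668 — 3 statements merged into one kernel-verified Lean document; each statement's English description precedes it below -/
import Mathlib

section
/- Let k ≤ n be natural numbers and let M be a real k×n matrix. Then Σ_γ |det M_γ| ≤ √(C(n,k)) · √(det(M Mᵀ)), where the sum runs over all subsets γ of {0,…,n−1} with exactly k elements, M_γ is the k×k submatrix of M formed by the columns indexed by γ in increasing order, and C(n,k) is the binomial coefficient n choose k. -/
open Finset Matrix Equiv

private lemma det_mul_expand {k n : ℕ} (M : Matrix (Fin k) (Fin n) ℝ)
    (N : Matrix (Fin n) (Fin k) ℝ) :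
    (M * N).det = ∑ p : Fin k → Fin n, (∏ i, N (p i) i) * (M.submatrix id p).det := by
  simp only [det_apply', mul_apply, Finset.prod_univ_sum, Finset.mul_sum,
    Fintype.piFinset_univ]
  rw [Finset.sum_comm]
  refine Finset.sum_congr rfl fun p _ => ?_
  refine Finset.sum_congr rfl fun σ _ => ?_
  rw [Finset.prod_mul_distrib]
  simp only [submatrix_apply, id]
  ring

private lemma cauchy_binet {k n : ℕ} (M : Matrix (Fin k) (Fin n) ℝ)
    (N : Matrix (Fin n) (Fin k) ℝ) :
    (M * N).det = ∑ γ ∈ (Finset.powersetCard k (Finset.univ : Finset (Fin n))).attach,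
      (M.submatrix id (γ.1.orderEmbOfFin (Finset.mem_powersetCard.mp γ.2).2)).det *
      (N.submatrix (γ.1.orderEmbOfFin (Finset.mem_powersetCard.mp γ.2).2) id).det := by
  rw [det_mul_expand]
  rw [← Finset.sum_filter_add_sum_filter_not Finset.univ (fun p => Function.Injective p)]
  have h0 : ∑ p ∈ Finset.univ.filter (fun p : Fin k → Fin n => ¬ Function.Injective p),
      (∏ i, N (p i) i) * (M.submatrix id p).det = 0 := by
    apply Finset.sum_eq_zero
    intro p hp
    simp only [Finset.mem_filter] at hp
    obtain ⟨i, j, hij, hne⟩ := Function.not_injective_iff.mp hp.2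
    rw [Matrix.det_zero_of_column_eq hne (fun a => by simp [hij]), mul_zero]
  rw [h0, add_zero]
  have himg : ∀ (γ : Finset (Fin n)) (h : γ.card = k) (π : Perm (Fin k)),
      Finset.image (⇑(γ.orderEmbOfFin h) ∘ ⇑π) Finset.univ = γ := by
    intro γ h π
    apply Finset.coe_injective
    rw [Finset.coe_image, Finset.coe_univ, Set.image_univ, Set.range_comp,
      Set.range_eq_univ.mpr π.surjective, Set.image_univ]
    exact Finset.range_orderEmbOfFin γ h
  rw [show (Finset.univ.filter (fun p : Fin k → Fin n => Function.Injective p)).sum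
      (fun p => (∏ i, N (p i) i) * (M.submatrix id p).det) =
      ∑ a ∈ ((Finset.powersetCard k (Finset.univ : Finset (Fin n))).attach ×ˢ
        (Finset.univ : Finset (Perm (Fin k)))),
        (∏ i, N ((a.1.1.orderEmbOfFin (Finset.mem_powersetCard.mp a.1.2).2) (a.2 i)) i) *
          (M.submatrix id (⇑(a.1.1.orderEmbOfFin (Finset.mem_powersetCard.mp a.1.2).2) ∘ ⇑a.2)).det
      from ?_]
  · rw [Finset.sum_product]
    refine Finset.sum_congr rfl fun γ _ => ?_
    set e := γ.1.orderEmbOfFin (Finset.mem_powersetCard.mp γ.2).2 with he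
    have hsub : ∀ π : Perm (Fin k),
        M.submatrix id (⇑e ∘ ⇑π) = (M.submatrix id ⇑e).submatrix id ⇑π := by
      intro π; rw [Matrix.submatrix_submatrix]; rfl
    calc ∑ π : Perm (Fin k), (∏ i, N (e (π i)) i) *
          (M.submatrix id (⇑e ∘ ⇑π)).det
        = ∑ π : Perm (Fin k), (M.submatrix id ⇑e).det *
            (((Perm.sign π : ℤ) : ℝ) * ∏ i, (N.submatrix ⇑e id) (π i) i) := by
          refine Finset.sum_congr rfl fun π _ => ?_
          rw [hsub, Matrix.det_permute']
          simp only [submatrix_apply, id]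
          push_cast
          ring
      _ = _ := by
          rw [← Finset.mul_sum, det_apply' (N.submatrix ⇑e id)]
  · symm
    refine Finset.sum_bij (fun a _ =>
      ⇑(a.1.1.orderEmbOfFin (Finset.mem_powersetCard.mp a.1.2).2) ∘ ⇑a.2) ?_ ?_ ?_ ?_
    · rintro ⟨⟨γ, hγ⟩, π⟩ -
      simp only [Finset.mem_filter, Finset.mem_univ, true_and]
      exact ((γ.orderEmbOfFin (Finset.mem_powersetCard.mp hγ).2).injective).comp π.injective
    · intro a1 ha1 a2 ha2 hEq
      obtain ⟨⟨γ, hγ⟩, π⟩ := a1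
      obtain ⟨⟨δ, hδ⟩, ρ⟩ := a2
      simp only at hEq
      have hγδ : γ = δ := by
        have h1 := himg γ (Finset.mem_powersetCard.mp hγ).2 π
        have h2 := himg δ (Finset.mem_powersetCard.mp hδ).2 ρ
        rw [← h1, ← h2, hEq]
      subst hγδ
      have hπρ : π = ρ := by
        ext i
        exact congrArg _ ((γ.orderEmbOfFin (Finset.mem_powersetCard.mp hγ).2).injective (congrFun hEq i))
      subst hπρ
      rfl
    · rintro p hp
      simp only [Finset.mem_filter, Finset.mem_univ, true_and] at hp
      set γ : Finset (Fin n) := Finset.image p Finset.univ with hγdef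
      have hcard : γ.card = k := by
        rw [hγdef, Finset.card_image_of_injective _ hp, Finset.card_univ, Fintype.card_fin]
      have hγmem : γ ∈ Finset.powersetCard k (Finset.univ : Finset (Fin n)) :=
        Finset.mem_powersetCard.mpr ⟨Finset.subset_univ _, hcard⟩
      have hmem : ∀ i, p i ∈ γ := fun i => Finset.mem_image_of_mem p (Finset.mem_univ i)
      set g : Fin k → Fin k := fun i => (γ.orderIsoOfFin hcard).symm ⟨p i, hmem i⟩ with hg
      have hginj : Function.Injective g := by
        intro i j hij
        apply hp
        have := congrArg (fun x => ((γ.orderIsoOfFin hcard) x : Fin n)) hij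
        simpa [hg] using this
      refine ⟨⟨⟨γ, hγmem⟩, Equiv.ofBijective g ((Finite.injective_iff_bijective).mp hginj)⟩,
        Finset.mem_product.mpr ⟨Finset.mem_attach _ _, Finset.mem_univ _⟩, ?_⟩
      have hcast : (Finset.mem_powersetCard.mp hγmem).2 = hcard := rfl
      funext i
      simp only [Function.comp_apply, Equiv.ofBijective_apply, hcast]
      rw [← Finset.coe_orderIsoOfFin_apply]
      simp [hg]
    · rintro ⟨⟨γ, hγ⟩, π⟩ -
      rfl

/-- For a real `k × n` matrix `M` with `k ≤ n`, the sum over all `k`-element subsets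
`γ` of the column indices of `|det M_γ|` (where `M_γ` is the submatrix of the columns
in `γ`, in increasing order) is at most `√(C(n,k)) * √(det (M * Mᵀ))`. -/
theorem sum_abs_det_submatrix_le (k n : ℕ) (hkn : k ≤ n) (M : Matrix (Fin k) (Fin n) ℝ) :
    ∑ γ ∈ (Finset.powersetCard k (Finset.univ : Finset (Fin n))).attach,
        |(M.submatrix id (γ.1.orderEmbOfFin (Finset.mem_powersetCard.mp γ.2).2)).det| ≤
      Real.sqrt (n.choose k) * Real.sqrt (M * Mᵀ).det := by
  have hCB : (M * Mᵀ).det = ∑ γ ∈ (Finset.powersetCard k (Finset.univ : Finset (Fin n))).attach,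
      |(M.submatrix id (γ.1.orderEmbOfFin (Finset.mem_powersetCard.mp γ.2).2)).det| ^ 2 := by
    rw [cauchy_binet M Mᵀ]
    refine Finset.sum_congr rfl fun γ _ => ?_
    rw [← Matrix.transpose_submatrix, Matrix.det_transpose, sq_abs, sq]
  have hcard : ((Finset.powersetCard k (Finset.univ : Finset (Fin n))).attach.card : ℝ)
      = (n.choose k : ℝ) := by
    rw [Finset.card_attach, Finset.card_powersetCard, Finset.card_univ, Fintype.card_fin]
  calc ∑ γ ∈ (Finset.powersetCard k (Finset.univ : Finset (Fin n))).attach,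
        |(M.submatrix id (γ.1.orderEmbOfFin (Finset.mem_powersetCard.mp γ.2).2)).det|
      = ∑ γ ∈ (Finset.powersetCard k (Finset.univ : Finset (Fin n))).attach,
        1 * |(M.submatrix id (γ.1.orderEmbOfFin (Finset.mem_powersetCard.mp γ.2).2)).det| := by
        simp
    _ ≤ Real.sqrt (∑ γ ∈ (Finset.powersetCard k (Finset.univ : Finset (Fin n))).attach,
          (1:ℝ) ^ 2) *
        Real.sqrt (∑ γ ∈ (Finset.powersetCard k (Finset.univ : Finset (Fin n))).attach,
          |(M.submatrix id (γ.1.orderEmbOfFin (Finset.mem_powersetCard.mp γ.2).2)).det| ^ 2) :=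
        Real.sum_mul_le_sqrt_mul_sqrt _ _ _
    _ = Real.sqrt (n.choose k) * Real.sqrt (M * Mᵀ).det := by
        rw [← hCB]
        congr 1
        rw [Finset.sum_const, one_pow, nsmul_eq_mul, mul_one, hcard]
end

section
/- Let k₁ ≤ n₁ and k₂ ≤ n₂ be natural numbers, let M₁ be a real k₁×n₁ matrix and M₂ a real k₂×n₂ matrix, and let M be the block-diagonal (k₁+k₂)×(n₁+n₂) real matrix with diagonal blocks M₁ and M₂ (and zero off-diagonal blocks). Then: (a) for every subset γ of the column indices {0,…,n₁+n₂−1} with |γ| = k₁+k₂, if the number of elements of γ that are smaller than n₁ is not equal to k₁, then det M_γ = 0, where M_γ is the square submatrix of M formed by the columns indexed by γ in increasing order; (b) Σ_γ |det M_γ| ≤ √(C(n₁,k₁)·C(n₂,k₂)) · √(det(M Mᵀ)), where the sum runs over all subsets γ with |γ| = k₁+k₂. -/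
/-!
A nonzero term `sign σ * ∏ i, M_γ (σ i) i` of the Leibniz expansion of `det M_γ` avoids
the zero blocks, so `σ` matches the first `k₁` rows with the columns of `γ` below `n₁`;
hence only the `γ` splitting as `(k₁, k₂)` contribute, and there are at most
`C(n₁,k₁) * C(n₂,k₂)` of them. Cauchy–Schwarz over these `γ` and the Cauchy–Binet formula
`∑ γ, det M_γ ^ 2 = det (M * Mᵀ)` give the bound.
-/

open Finset Matrix Equiv Function

namespace Finset

theorem exists_orderEmbOfFin_comp_perm_eq {α : Type*} [LinearOrder α] {k : ℕ}
    {p : Fin k → α} (hp : Injective p) :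
    ∃ (s : Finset α) (hs : #s = k) (σ : Perm (Fin k)), s.orderEmbOfFin hs ∘ σ = p := by
  have hs : #(univ.image p) = k := by simp [card_image_of_injective _ hp]
  have hmono : StrictMono (p ∘ Tuple.sort p) :=
    (Tuple.monotone_sort p).strictMono_of_injective (hp.comp (Tuple.sort p).injective)
  refine ⟨_, hs, (Tuple.sort p)⁻¹, ?_⟩
  rw [← orderEmbOfFin_unique hs (fun i => mem_image_of_mem _ (mem_univ _)) hmono]
  ext i
  simp

theorem sum_injective_eq_sum_powersetCard_sum_perm {α M : Type*} [LinearOrder α] [Fintype α]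
    [AddCommMonoid M] (k : ℕ) (f : (Fin k → α) → M) :
    ∑ p with Injective p, f p =
      ∑ γ ∈ (powersetCard k (univ : Finset α)).attach, ∑ σ : Perm (Fin k),
        f (γ.1.orderEmbOfFin (mem_powersetCard.mp γ.2).2 ∘ σ) := by
  rw [← sum_product']
  refine (sum_bij (fun x _ => x.1.1.orderEmbOfFin (mem_powersetCard.mp x.1.2).2 ∘ x.2)
    (fun x _ => ?_) (fun x _ y _ h => ?_) (fun p hp => ?_) fun _ _ => rfl).symm
  · simpa using (x.1.1.orderEmbOfFin _).injective.comp x.2.injective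
  · obtain ⟨⟨γ, hγ⟩, σ⟩ := x
    obtain ⟨⟨δ, hδ⟩, τ⟩ := y
    obtain rfl : γ = δ := by
      simpa [← image_image, image_univ_equiv] using congrArg (univ.image ·) h
    simpa [Prod.ext_iff, ← Perm.ext_iff] using congrFun h
  · obtain ⟨s, hs, σ, rfl⟩ := exists_orderEmbOfFin_comp_perm_eq (mem_filter.mp hp).2
    exact ⟨(⟨s, mem_powersetCard.mpr ⟨subset_univ s, hs⟩⟩, σ), by simp, rfl⟩

theorem card_filter_powersetCard_card_filter_eq_le {α : Type*} [DecidableEq α] (s : Finset α)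
    (p : α → Prop) [DecidablePred p] (j k : ℕ) :
    #{γ ∈ powersetCard (j + k) s | #{x ∈ γ | p x} = j} ≤
      (#{x ∈ s | p x}).choose j * (#{x ∈ s | ¬p x}).choose k := by
  rw [← card_powersetCard, ← card_powersetCard, ← card_product]
  refine card_le_card_of_injOn (fun γ => ({x ∈ γ | p x}, {x ∈ γ | ¬p x})) (fun γ hγ => ?_)
    fun γ _ δ _ h => ?_
  · obtain ⟨hγ, hj⟩ := mem_filter.mp hγ
    obtain ⟨hγs, hγk⟩ := mem_powersetCard.mp hγ
    have : #{x ∈ γ | p x} + #{x ∈ γ | ¬p x} = #γ := card_filter_add_card_filter_not p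
    simp only [coe_product, Set.mem_prod, mem_coe, mem_powersetCard]
    refine ⟨⟨filter_subset_filter _ hγs, hj⟩, filter_subset_filter _ hγs, ?_⟩
    omega
  · rw [← filter_union_filter_not_eq p γ, ← filter_union_filter_not_eq p δ]
    simp only [Prod.ext_iff] at h
    rw [h.1, h.2]

theorem card_filter_orderEmbOfFin_eq {α : Type*} [LinearOrder α] (s : Finset α) {k : ℕ}
    (h : #s = k) (p : α → Prop) [DecidablePred p] :
    #{i | p (s.orderEmbOfFin h i)} = #{x ∈ s | p x} := by
  conv_rhs => rw [← map_orderEmbOfFin_univ s h, filter_map, card_map]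
  rfl

end Finset

namespace Matrix

theorem reindex_fromBlocks_zero_zero_apply_eq_zero {α : Type*} [Zero α] {k₁ k₂ n₁ n₂ : ℕ}
    (A : Matrix (Fin k₁) (Fin n₁) α) (D : Matrix (Fin k₂) (Fin n₂) α) {i : Fin (k₁ + k₂)}
    {j : Fin (n₁ + n₂)} (h : ¬((i : ℕ) < k₁ ↔ (j : ℕ) < n₁)) :
    reindex finSumFinEquiv finSumFinEquiv (fromBlocks A 0 0 D) i j = 0 := by
  induction i using Fin.addCases <;> induction j using Fin.addCases <;> simp_all

variable {R : Type*} [CommRing R]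

theorem det_mul_eq_sum_det_submatrix_mul_prod {m n : Type*} [Fintype m] [DecidableEq m]
    [Fintype n] (A : Matrix m n R) (B : Matrix n m R) :
    det (A * B) = ∑ p : m → n, det (A.submatrix id p) * ∏ i, B (p i) i := by
  simp only [det_apply', mul_apply, prod_univ_sum, mul_sum, Fintype.piFinset_univ,
    prod_mul_distrib, sum_mul, submatrix_apply, id]
  rw [sum_comm]
  simp only [mul_assoc]

theorem det_submatrix_eq_zero_of_not_injective {m n : Type*} [Fintype m] [DecidableEq m]
    (A : Matrix m n R) {p : m → n} (hp : ¬Injective p) : det (A.submatrix id p) = 0 := by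
  obtain ⟨i, j, hpij, hij⟩ := not_injective_iff.mp hp
  exact det_zero_of_column_eq hij fun r => by simp [hpij]

/-- **Cauchy–Binet formula**. -/
theorem det_mul_eq_sum_powersetCard {k n : ℕ} (A : Matrix (Fin k) (Fin n) R)
    (B : Matrix (Fin n) (Fin k) R) :
    det (A * B) = ∑ γ ∈ (powersetCard k (univ : Finset (Fin n))).attach,
      det (A.submatrix id (γ.1.orderEmbOfFin (mem_powersetCard.mp γ.2).2)) *
        det (B.submatrix (γ.1.orderEmbOfFin (mem_powersetCard.mp γ.2).2) id) := by
  rw [det_mul_eq_sum_det_submatrix_mul_prod, ← sum_filter_of_ne (p := Injective),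
    sum_injective_eq_sum_powersetCard_sum_perm]
  · refine sum_congr rfl fun γ _ => ?_
    set e := γ.1.orderEmbOfFin (mem_powersetCard.mp γ.2).2
    rw [det_apply' (B.submatrix e id), mul_sum]
    refine sum_congr rfl fun σ _ => ?_
    rw [show A.submatrix id (e ∘ σ) = (A.submatrix id e).submatrix id σ from rfl, det_permute',
      mul_assoc, mul_left_comm]
    rfl
  · exact fun p _ hp => by_contra fun h =>
      hp (by rw [det_submatrix_eq_zero_of_not_injective A h, zero_mul])

theorem det_eq_zero_of_card_filter_ne {m : Type*} [Fintype m] [DecidableEq m] (A : Matrix m m R)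
    (p q : m → Prop) [DecidablePred p] [DecidablePred q]
    (hA : ∀ i j, ¬(p i ↔ q j) → A i j = 0) (hpq : #{i | p i} ≠ #{j | q j}) :
    det A = 0 := by
  refine (det_apply' A).trans (sum_eq_zero fun σ _ => ?_)
  obtain ⟨i, hi⟩ : ∃ i, ¬(p (σ i) ↔ q i) := by
    by_contra! h
    exact hpq (card_equiv σ.symm fun i => by simpa using h (σ.symm i))
  exact mul_eq_zero_of_right _ (prod_eq_zero (mem_univ i) (hA _ _ hi))

theorem det_mul_transpose_eq_sum_sq {k n : ℕ} (M : Matrix (Fin k) (Fin n) R) :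
    det (M * Mᵀ) = ∑ γ ∈ (powersetCard k (univ : Finset (Fin n))).attach,
      det (M.submatrix id (γ.1.orderEmbOfFin (mem_powersetCard.mp γ.2).2)) ^ 2 := by
  simp only [det_mul_eq_sum_powersetCard, ← transpose_submatrix, det_transpose, sq]

theorem sum_abs_det_submatrix_le {k n : ℕ} (M : Matrix (Fin k) (Fin n) ℝ)
    (P : Finset (Fin n) → Prop) [DecidablePred P]
    (hP : ∀ γ (hγ : #γ = k), ¬P γ → det (M.submatrix id (γ.orderEmbOfFin hγ)) = 0) :
    ∑ γ ∈ (powersetCard k (univ : Finset (Fin n))).attach,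
        |det (M.submatrix id (γ.1.orderEmbOfFin (mem_powersetCard.mp γ.2).2))| ≤
      √(#{γ ∈ powersetCard k univ | P γ} : ℝ) * √(det (M * Mᵀ)) := by
  set F := fun γ : powersetCard k (univ : Finset (Fin n)) =>
    det (M.submatrix id (γ.1.orderEmbOfFin (mem_powersetCard.mp γ.2).2))
  have hcard : #{γ ∈ (powersetCard k (univ : Finset (Fin n))).attach | P γ.1} =
      #{γ ∈ powersetCard k univ | P γ} := by
    rw [filter_attach, card_map, card_attach]
  calc ∑ γ ∈ (powersetCard k univ).attach, |F γ|
      = ∑ γ ∈ (powersetCard k univ).attach with P γ.1, 1 * |F γ| := by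
        simp only [one_mul]
        refine (sum_filter_of_ne fun γ _ hγ => ?_).symm
        by_contra h
        exact hγ (by simp [F, hP γ.1 _ h])
    _ ≤ √(∑ γ ∈ (powersetCard k univ).attach with P γ.1, 1 ^ 2) *
          √(∑ γ ∈ (powersetCard k univ).attach with P γ.1, |F γ| ^ 2) :=
        Real.sum_mul_le_sqrt_mul_sqrt _ _ _
    _ ≤ √(#{γ ∈ powersetCard k univ | P γ} : ℝ) * √(det (M * Mᵀ)) := by
        rw [det_mul_transpose_eq_sum_sq]
        simp only [one_pow, sum_const, nsmul_eq_mul, mul_one, hcard, sq_abs]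
        gcongr
        exact filter_subset _ _

theorem det_submatrix_reindex_fromBlocks_eq_zero {k₁ k₂ n₁ n₂ : ℕ}
    (M₁ : Matrix (Fin k₁) (Fin n₁) R) (M₂ : Matrix (Fin k₂) (Fin n₂) R)
    (γ : Finset (Fin (n₁ + n₂))) (hγ : #γ = k₁ + k₂)
    (hsplit : #{i ∈ γ | i.val < n₁} ≠ k₁) :
    det ((reindex finSumFinEquiv finSumFinEquiv (fromBlocks M₁ 0 0 M₂)).submatrix id
      (γ.orderEmbOfFin hγ)) = 0 := by
  refine det_eq_zero_of_card_filter_ne _ (fun i => (i : ℕ) < k₁)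
    (fun j => (γ.orderEmbOfFin hγ j : ℕ) < n₁)
    (fun _ _ h => reindex_fromBlocks_zero_zero_apply_eq_zero _ _ h) ?_
  rw [Fin.card_filter_val_lt, card_filter_orderEmbOfFin_eq γ hγ fun i => i.val < n₁]
  omega

end Matrix

theorem blockDiagonal_det_submatrix_general (k₁ n₁ k₂ n₂ : ℕ)
    (M₁ : Matrix (Fin k₁) (Fin n₁) ℝ) (M₂ : Matrix (Fin k₂) (Fin n₂) ℝ)
    (M : Matrix (Fin (k₁ + k₂)) (Fin (n₁ + n₂)) ℝ)
    (hM : M = Matrix.reindex finSumFinEquiv finSumFinEquiv (Matrix.fromBlocks M₁ 0 0 M₂)) :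
    (∀ (γ : Finset (Fin (n₁ + n₂))) (hγ : γ.card = k₁ + k₂),
        (γ.filter fun i : Fin (n₁ + n₂) => (i : ℕ) < n₁).card ≠ k₁ →
          (M.submatrix id (γ.orderEmbOfFin hγ)).det = 0) ∧
      ∑ γ ∈ (Finset.powersetCard (k₁ + k₂) (Finset.univ : Finset (Fin (n₁ + n₂)))).attach,
          |(M.submatrix id (γ.1.orderEmbOfFin (Finset.mem_powersetCard.mp γ.2).2)).det| ≤
        Real.sqrt (n₁.choose k₁ * n₂.choose k₂) * Real.sqrt (M * Mᵀ).det := by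
  subst hM
  have hsplit := det_submatrix_reindex_fromBlocks_eq_zero M₁ M₂
  refine ⟨hsplit, (sum_abs_det_submatrix_le _ _ hsplit).trans ?_⟩
  have hcount := card_filter_powersetCard_card_filter_eq_le (univ : Finset (Fin (n₁ + n₂)))
    (fun i => (i : ℕ) < n₁) k₁ k₂
  simp only [filter_not, card_sdiff, Fin.card_filter_val_lt, inter_univ, card_univ,
    Fintype.card_fin, min_eq_right (Nat.le_add_right n₁ n₂), Nat.add_sub_cancel_left] at hcount
  gcongr
  exact_mod_cast hcount

/-- Block-diagonal Cauchy–Binet estimate: for the block-diagonal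
`(k₁+k₂) × (n₁+n₂)` matrix `M` with diagonal blocks `M₁`, `M₂`:
(a) the determinant of the submatrix of columns `γ` vanishes unless exactly `k₁`
elements of `γ` are smaller than `n₁`;
(b) the sum of `|det M_γ|` over all `(k₁+k₂)`-element column subsets `γ` is at most
`√(C(n₁,k₁) * C(n₂,k₂)) * √(det (M * Mᵀ))`. -/
theorem blockDiagonal_det_submatrix (k₁ n₁ k₂ n₂ : ℕ) (h₁ : k₁ ≤ n₁) (h₂ : k₂ ≤ n₂)
    (M₁ : Matrix (Fin k₁) (Fin n₁) ℝ) (M₂ : Matrix (Fin k₂) (Fin n₂) ℝ)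
    (M : Matrix (Fin (k₁ + k₂)) (Fin (n₁ + n₂)) ℝ)
    (hM : M = Matrix.reindex finSumFinEquiv finSumFinEquiv (Matrix.fromBlocks M₁ 0 0 M₂)) :
    (∀ (γ : Finset (Fin (n₁ + n₂))) (hγ : γ.card = k₁ + k₂),
        (γ.filter fun i : Fin (n₁ + n₂) => (i : ℕ) < n₁).card ≠ k₁ →
          (M.submatrix id (γ.orderEmbOfFin hγ)).det = 0) ∧
      ∑ γ ∈ (Finset.powersetCard (k₁ + k₂) (Finset.univ : Finset (Fin (n₁ + n₂)))).attach,
          |(M.submatrix id (γ.1.orderEmbOfFin (Finset.mem_powersetCard.mp γ.2).2)).det| ≤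
        Real.sqrt (n₁.choose k₁ * n₂.choose k₂) * Real.sqrt (M * Mᵀ).det :=
  blockDiagonal_det_submatrix_general k₁ n₁ k₂ n₂ M₁ M₂ M hM
end

section
/- Geometric Cauchy–Binet identity: let f : EuclideanSpace ℝ (Fin k) → EuclideanSpace ℝ (Fin n) be a linear map and let s ⊆ EuclideanSpace ℝ (Fin k) be a measurable set. Then (μH[k](f '' s))² = Σ_γ (μH[k](π_γ '' (f '' s)))² in the extended nonnegative reals, where the sum runs over all subsets γ of {0,…,n−1} of cardinality k and π_γ : EuclideanSpace ℝ (Fin n) → EuclideanSpace ℝ (Fin k) is the coordinate projection sending x to the vector of its coordinates with indices in γ, listed in increasing order. -/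
open MeasureTheory Finset

/-- The coordinate projection `π_γ : ℝⁿ → ℝᵏ` associated to a `k`-element subset
`γ` of the coordinates: it sends `x` to the vector of its coordinates with indices
in `γ`, listed in increasing order. -/
noncomputable def coordProj {n k : ℕ} (γ : Finset (Fin n)) (h : γ.card = k) :
    EuclideanSpace ℝ (Fin n) → EuclideanSpace ℝ (Fin k) :=
  fun x => WithLp.toLp 2 (fun i => x (γ.orderEmbOfFin h i))

open Equiv Matrix Module

/-!
Write `f` as an `n × k` matrix `M`. A linear map out of a `k`-dimensional space multiplies
`k`-dimensional Hausdorff measure by `√det (fᵀ f)`: an injective `f` is an isometry after an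
endomorphism `A`, with `fᵀ f = Aᵀ A`, while a non-injective `f` has an image of dimension `< k`,
hence of `μH[k]`-measure zero. So the left side is `det (Mᵀ M) · μH[k](s)²`, the `γ`-th summand
is `det (M_γ)² · μH[k](s)²` for the `k × k` submatrix `M_γ` of rows `γ`, and
`det (Mᵀ M) = ∑_γ det (M_γ)²` is the Cauchy–Binet formula.
-/

section CauchyBinet

variable {R : Type*} [CommRing R] {α : Type*} [Fintype α] {k : ℕ}

theorem Matrix.det_mul_eq_sum_prod_mul_det_submatrix (A : Matrix (Fin k) α R)
    (B : Matrix α (Fin k) R) :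
    (A * B).det = ∑ p : Fin k → α, (∏ i, B (p i) i) * (A.submatrix id p).det := by
  simp only [det_apply', mul_apply, prod_univ_sum, mul_sum, submatrix_apply, id,
    Fintype.piFinset_univ, prod_mul_distrib]
  rw [sum_comm]
  refine sum_congr rfl fun p _ => sum_congr rfl fun σ _ => ?_
  ring

variable [LinearOrder α]

theorem Finset.sum_injective_eq_sum_powersetCard_perm {M : Type*} [AddCommMonoid M]
    (F : (Fin k → α) → M) :
    ∑ p with Function.Injective p, F p =
      ∑ γ ∈ (powersetCard k (univ : Finset α)).attach, ∑ τ : Perm (Fin k),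
        F (γ.1.orderEmbOfFin (mem_powersetCard.mp γ.2).2 ∘ τ) := by
  rw [← sum_product' (t := univ)]
  symm
  -- `(γ, τ) ↦ (increasing enumeration of γ) ∘ τ`; an injective `p` is hit by its image together
  -- with the inverse of the permutation sorting `p`.
  refine sum_bij (fun x _ => x.1.1.orderEmbOfFin (mem_powersetCard.mp x.1.2).2 ∘ x.2)
    (fun x _ => ?_) (fun x _ y _ h => ?_) (fun p hp => ?_) (fun _ _ => rfl)
  · simpa using (orderEmbOfFin _ _).injective.comp x.2.injective
  · obtain ⟨⟨γ₁, hγ₁⟩, τ₁⟩ := x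
    obtain ⟨⟨γ₂, hγ₂⟩, τ₂⟩ := y
    obtain rfl : γ₁ = γ₂ := coe_injective <| by
      simpa only [EquivLike.range_comp, range_orderEmbOfFin] using congrArg Set.range h
    obtain rfl : τ₁ = τ₂ := DFunLike.coe_injective ((orderEmbOfFin _ _).injective.comp_left h)
    rfl
  · have hinj : Function.Injective p := (mem_filter.mp hp).2
    have hcard : #(image p univ) = k := by simp [card_image_of_injective _ hinj]
    have hsorted : p ∘ Tuple.sort p = (image p univ).orderEmbOfFin hcard :=
      orderEmbOfFin_unique hcard (fun i => mem_image_of_mem p (mem_univ _))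
        ((Tuple.monotone_sort p).strictMono_of_injective (hinj.comp (Tuple.sort p).injective))
    refine ⟨(⟨image p univ, mem_powersetCard.mpr ⟨subset_univ _, hcard⟩⟩, (Tuple.sort p)⁻¹),
      by simp, ?_⟩
    simp [← hsorted, Function.comp_assoc]

theorem Matrix.det_mul_eq_sum_powersetCard_s5 (A : Matrix (Fin k) α R) (B : Matrix α (Fin k) R) :
    (A * B).det = ∑ γ ∈ (powersetCard k (univ : Finset α)).attach,
      (A.submatrix id (γ.1.orderEmbOfFin (mem_powersetCard.mp γ.2).2)).det *
        (B.submatrix (γ.1.orderEmbOfFin (mem_powersetCard.mp γ.2).2) id).det := by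
  rw [det_mul_eq_sum_prod_mul_det_submatrix, ← sum_filter_of_ne (p := Function.Injective),
    sum_injective_eq_sum_powersetCard_perm]
  · refine sum_congr rfl fun γ _ => ?_
    set e := γ.1.orderEmbOfFin (mem_powersetCard.mp γ.2).2
    have hperm (τ : Perm (Fin k)) : A.submatrix id (e ∘ τ) = (A.submatrix id e).submatrix id τ :=
      rfl
    simp only [hperm, det_permute', det_apply' (B.submatrix e id), mul_sum]
    refine sum_congr rfl fun τ _ => ?_
    simp only [submatrix_apply, id, Function.comp_apply]
    ring
  · intro p _ hp
    by_contra hinj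
    obtain ⟨i, j, hpij, hij⟩ := Function.not_injective_iff.mp hinj
    exact hp (by rw [det_zero_of_column_eq hij (fun r => by simp [hpij]), mul_zero])

theorem Matrix.det_transpose_mul_self_eq_sum_sq (M : Matrix α (Fin k) R) :
    (Mᵀ * M).det = ∑ γ ∈ (powersetCard k (univ : Finset α)).attach,
      (M.submatrix (γ.1.orderEmbOfFin (mem_powersetCard.mp γ.2).2) id).det ^ 2 := by
  rw [det_mul_eq_sum_powersetCard_s5]
  refine sum_congr rfl fun γ _ => ?_
  rw [← transpose_submatrix, det_transpose, sq]

end CauchyBinet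

theorem LinearMap.det_adjoint {𝕜 E : Type*} [RCLike 𝕜]
    [NormedAddCommGroup E] [InnerProductSpace 𝕜 E] [FiniteDimensional 𝕜 E] (A : E →ₗ[𝕜] E) :
    LinearMap.det (LinearMap.adjoint A) = star (LinearMap.det A) := by
  let b := stdOrthonormalBasis 𝕜 E
  rw [← det_toMatrix b.toBasis, ← det_toMatrix b.toBasis, toMatrix_adjoint, det_conjTranspose]

theorem LinearMap.hausdorffMeasure_image_eq_zero_of_not_injective {E F : Type*}
    [NormedAddCommGroup E] [NormedSpace ℝ E] [FiniteDimensional ℝ E]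
    [NormedAddCommGroup F] [NormedSpace ℝ F] [MeasurableSpace F] [BorelSpace F]
    (f : E →ₗ[ℝ] F) (hf : ¬Function.Injective f) (s : Set E) :
    μH[finrank ℝ E] (f '' s) = 0 := by
  have hrank : finrank ℝ (range f) < finrank ℝ E := by
    have hker : 0 < finrank ℝ (ker f) := Module.finrank_pos_iff.mpr <|
      Submodule.nontrivial_iff_ne_bot.mpr (by rwa [Ne, ker_eq_bot])
    have := f.finrank_range_add_finrank_ker
    omega
  have hsub : f '' s ⊆ Subtype.val '' (Set.univ : Set (range f)) := by
    rintro _ ⟨x, -, rfl⟩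
    exact ⟨⟨f x, mem_range_self f x⟩, trivial, rfl⟩
  refine measure_mono_null hsub ?_
  rw [isometry_subtype_coe.hausdorffMeasure_image (Or.inl (Nat.cast_nonneg _)),
    Real.hausdorffMeasure_of_finrank_lt (by exact_mod_cast hrank), Measure.coe_zero, Pi.zero_apply]

section InnerProductSpace

variable {E F : Type*} [NormedAddCommGroup E] [InnerProductSpace ℝ E] [FiniteDimensional ℝ E]
  [NormedAddCommGroup F] [InnerProductSpace ℝ F]

theorem LinearMap.exists_linearIsometry_comp_eq_of_injective (f : E →ₗ[ℝ] F)
    (hf : Function.Injective f) : ∃ (j : E →ₗᵢ[ℝ] F) (A : E →ₗ[ℝ] E), j.toLinearMap ∘ₗ A = f := by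
  have hrank : finrank ℝ (range f) = finrank ℝ E := finrank_range_of_inj hf
  let e : range f ≃ₗᵢ[ℝ] E :=
    (stdOrthonormalBasis ℝ (range f)).equiv (stdOrthonormalBasis ℝ E) (finCongr hrank)
  refine ⟨(range f).subtypeₗᵢ.comp e.symm.toLinearIsometry, e.toLinearMap ∘ₗ f.rangeRestrict, ?_⟩
  ext x
  simp

variable [FiniteDimensional ℝ F] [MeasurableSpace E] [BorelSpace E] [MeasurableSpace F]
  [BorelSpace F]

theorem LinearMap.hausdorffMeasure_image_sq (f : E →ₗ[ℝ] F) (s : Set E) :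
    μH[finrank ℝ E] (f '' s) ^ 2 =
      ENNReal.ofReal (LinearMap.det (adjoint f ∘ₗ f)) * μH[finrank ℝ E] s ^ 2 := by
  by_cases hf : Function.Injective f
  · obtain ⟨j, A, rfl⟩ := f.exists_linearIsometry_comp_eq_of_injective hf
    have hgram : adjoint (j.toLinearMap ∘ₗ A) ∘ₗ (j.toLinearMap ∘ₗ A) = adjoint A ∘ₗ A := by
      rw [adjoint_comp, comp_assoc, ← comp_assoc A, j.adjoint_comp_self', id_comp]
    rw [hgram, det_comp, det_adjoint, star_trivial, coe_comp, Set.image_comp, j.coe_toLinearMap,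
      j.isometry.hausdorffMeasure_image (Or.inl (Nat.cast_nonneg _)),
      Measure.addHaar_image_linearMap, mul_pow, ← ENNReal.ofReal_pow (abs_nonneg _), sq_abs, sq]
  · have hdet : LinearMap.det (adjoint f ∘ₗ f) = 0 :=
      det_eq_zero_iff_ker_ne_bot.mpr (by rwa [ker_adjoint_comp_self, Ne, ker_eq_bot])
    rw [f.hausdorffMeasure_image_eq_zero_of_not_injective hf, hdet]
    simp

end InnerProductSpace

theorem Matrix.det_adjoint_toEuclideanLin_comp_self {ι κ : Type*} [Fintype ι] [DecidableEq ι]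
    [Fintype κ] [DecidableEq κ] (M : Matrix ι κ ℝ) :
    LinearMap.det (LinearMap.adjoint (toEuclideanLin M) ∘ₗ toEuclideanLin M) = (Mᵀ * M).det := by
  rw [← toEuclideanLin_conjTranspose_eq_adjoint, toEuclideanLin_eq_toLin_orthonormal,
    toEuclideanLin_eq_toLin_orthonormal, ← toLin_mul, LinearMap.det_toLin,
    conjTranspose_eq_transpose_of_trivial]

theorem Matrix.hausdorffMeasure_image_toEuclideanLin_sq {ι : Type*} [Fintype ι] [DecidableEq ι]
    {k : ℕ} (M : Matrix ι (Fin k) ℝ) (s : Set (EuclideanSpace ℝ (Fin k))) :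
    μH[k] (toEuclideanLin M '' s) ^ 2 = ENNReal.ofReal (Mᵀ * M).det * μH[k] s ^ 2 := by
  simpa [det_adjoint_toEuclideanLin_comp_self] using (toEuclideanLin M).hausdorffMeasure_image_sq s

theorem coordProj_comp_toEuclideanLin {n k m : ℕ} (γ : Finset (Fin n)) (h : #γ = k)
    (M : Matrix (Fin n) (Fin m) ℝ) :
    coordProj γ h ∘ toEuclideanLin M = toEuclideanLin (M.submatrix (γ.orderEmbOfFin h) id) := by
  funext x
  ext i
  simp [coordProj, mulVec, dotProduct]

theorem hausdorff_measure_sq_eq_sum_proj_sq_general (k n : ℕ)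
    (f : EuclideanSpace ℝ (Fin k) →ₗ[ℝ] EuclideanSpace ℝ (Fin n))
    (s : Set (EuclideanSpace ℝ (Fin k))) :
    (μH[k] (f '' s)) ^ 2 =
      ∑ γ ∈ (Finset.powersetCard k (Finset.univ : Finset (Fin n))).attach,
        (μH[k] (coordProj γ.1 (Finset.mem_powersetCard.mp γ.2).2 '' (f '' s))) ^ 2 := by
  obtain ⟨M, rfl⟩ := toEuclideanLin.surjective f
  rw [hausdorffMeasure_image_toEuclideanLin_sq, det_transpose_mul_self_eq_sum_sq,
    ENNReal.ofReal_sum_of_nonneg (fun _ _ => sq_nonneg _), sum_mul]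
  refine sum_congr rfl fun γ _ => ?_
  rw [← Set.image_comp, coordProj_comp_toEuclideanLin, hausdorffMeasure_image_toEuclideanLin_sq,
    det_mul, det_transpose, ← sq]

/-- **Geometric Cauchy–Binet identity**: for a linear map
`f : EuclideanSpace ℝ (Fin k) → EuclideanSpace ℝ (Fin n)` and a measurable set `s`,
the square of the `k`-dimensional Hausdorff measure of `f '' s` equals the sum, over
all `k`-element coordinate subsets `γ`, of the squares of the `k`-dimensional
Hausdorff measures of the coordinate projections `π_γ '' (f '' s)`. -/
theorem hausdorff_measure_sq_eq_sum_proj_sq (k n : ℕ)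
    (f : EuclideanSpace ℝ (Fin k) →ₗ[ℝ] EuclideanSpace ℝ (Fin n))
    (s : Set (EuclideanSpace ℝ (Fin k))) (hs : MeasurableSet s) :
    (μH[k] (f '' s)) ^ 2 =
      ∑ γ ∈ (Finset.powersetCard k (Finset.univ : Finset (Fin n))).attach,
        (μH[k] (coordProj γ.1 (Finset.mem_powersetCard.mp γ.2).2 '' (f '' s))) ^ 2 :=
  hausdorff_measure_sq_eq_sum_proj_sq_general k n f s
end
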